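/- The logic B enjoys interpolation: if φ ⊢_B ψ then there is a formula χ such that every atom occurring in χ occurs in both φ and ψ, φ ⊢_B χ, and χ ⊢_B ψ. The logic K enjoys (K, B)-interpolation: if φ ⊢_K ψ then there is such a χ with φ ⊢_K χ and χ ⊢_B ψ. The logic ETL enjoys (ETL, B)-interpolation: if φ ⊢_ETL ψ then there is such a χ with φ ⊢_ETL χ and χ ⊢_B ψ. -/

import Mathlib

/-- Propositional formulas: atoms, conjunction, disjunction, De Morgan negation, ⊤, ⊥. -/
inductive Fm : Type where
  | atom : ℕ → Fm
  | conj : Fm → Fm → Fm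
  | disj : Fm → Fm → Fm
  | neg  : Fm → Fm
  | top  : Fm
  | bot  : Fm
deriving DecidableEq

/-- The atom `i` occurs in a formula. -/
def occurs (i : ℕ) : Fm → Prop
  | .atom j => i = j
  | .conj φ ψ => occurs i φ ∨ occurs i ψ
  | .disj φ ψ => occurs i φ ∨ occurs i ψ
  | .neg φ => occurs i φ
  | .top => False
  | .bot => False

/-- The four elements of the De Morgan algebra B4. -/
inductive B4 : Type where
  | f | n | b | t
deriving DecidableEq

/-- Meet in the truth order of B4 (bottom `f`, top `t`, `n` and `b` incomparable). -/
def bmeet : B4 → B4 → B4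
  | .f, _ => .f
  | _, .f => .f
  | .t, x => x
  | x, .t => x
  | .n, .n => .n
  | .b, .b => .b
  | .n, .b => .f
  | .b, .n => .f

/-- Join in the truth order of B4. -/
def bjoin : B4 → B4 → B4
  | .t, _ => .t
  | _, .t => .t
  | .f, x => x
  | x, .f => x
  | .n, .n => .n
  | .b, .b => .b
  | .n, .b => .t
  | .b, .n => .t

/-- De Morgan negation on B4: swaps `f` and `t`, fixes `n` and `b`. -/
def bneg : B4 → B4
  | .f => .t
  | .t => .f
  | .n => .n
  | .b => .b

/-- The information order ⊑ on B4: bottom `n`, top `b`, `f` and `t` incomparable. -/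
def infoLe (x y : B4) : Prop := x = y ∨ x = B4.n ∨ y = B4.b

/-- Evaluation of a formula in B4 under an atom assignment (the unique homomorphic
extension of the valuation of atoms). -/
def evalv (v : ℕ → B4) : Fm → B4
  | .atom j => v j
  | .conj φ ψ => bmeet (evalv v φ) (evalv v ψ)
  | .disj φ ψ => bjoin (evalv v φ) (evalv v ψ)
  | .neg φ => bneg (evalv v φ)
  | .top => .t
  | .bot => .f

/-- Designated values of the matrices B4 and LP3: `t` and `b`. -/
def desB (x : B4) : Prop := x = B4.t ∨ x = B4.b

/-- Consequence over the matrix B4 (designated values {t, b}): the Dunn–Belnap logic B. -/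
def Bcon (Γ : Set Fm) (φ : Fm) : Prop :=
  ∀ v : ℕ → B4, (∀ γ ∈ Γ, desB (evalv v γ)) → desB (evalv v φ)

/-- Consequence over the submatrix LP3 on {f, b, t} (designated {t, b}): the Logic of Paradox. -/
def LPcon (Γ : Set Fm) (φ : Fm) : Prop :=
  ∀ v : ℕ → B4, (∀ j, v j ≠ B4.n) → (∀ γ ∈ Γ, desB (evalv v γ)) → desB (evalv v φ)

/-- Consequence over the submatrix K3 on {f, n, t} (designated {t}): strong Kleene logic. -/
def Kcon (Γ : Set Fm) (φ : Fm) : Prop :=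
  ∀ v : ℕ → B4, (∀ j, v j ≠ B4.b) → (∀ γ ∈ Γ, evalv v γ = B4.t) → evalv v φ = B4.t

/-- Consequence over the matrix ETL4 (the algebra B4 with designated set {t}): Exactly True Logic. -/
def ETLcon (Γ : Set Fm) (φ : Fm) : Prop :=
  ∀ v : ℕ → B4, (∀ γ ∈ Γ, evalv v γ = B4.t) → evalv v φ = B4.t

/-- Consequence over the Boolean submatrix on {f, t} (designated {t}): classical logic CL. -/
def CLcon (Γ : Set Fm) (φ : Fm) : Prop :=
  ∀ v : ℕ → B4, (∀ j, v j = B4.f ∨ v j = B4.t) →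
    (∀ γ ∈ Γ, evalv v γ = B4.t) → evalv v φ = B4.t


/-!
The interpolant is the disjunction of the diagrams, over the shared atoms, of the valuations
that make the premise true in the logic at hand. In B4 the diagram of `u` is designated at `w`
exactly when `u ⊑ w` in the information order, and all operations of B4 are monotone for `⊑`.
So a valuation designating the interpolant lies above, on the shared atoms, a valuation
satisfying the premise; gluing the latter on the atoms of `φ` with `n` elsewhere gives a
valuation below it on all atoms of `ψ`, to which the hypothesis applies. On the premise side,
K and ETL are handled by conflation (the automorphism swapping `n` and `b`): a value is `t`
iff both it and its conflate are designated.
-/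

instance : Fintype B4 :=
  ⟨⟨{B4.f, B4.n, B4.b, B4.t}, by decide⟩, fun x => by cases x <;> decide⟩

instance (x y : B4) : Decidable (infoLe x y) := by unfold infoLe; infer_instance

instance (x : B4) : Decidable (desB x) := by unfold desB; infer_instance

namespace B4

lemma infoLe_refl (x : B4) : infoLe x x := Or.inl rfl

lemma infoLe_n (x : B4) : infoLe B4.n x := Or.inr (Or.inl rfl)

lemma bmeet_infoLe_bmeet : ∀ x y x' y' : B4, infoLe x y → infoLe x' y' →
    infoLe (bmeet x x') (bmeet y y') := by decide

lemma bjoin_infoLe_bjoin : ∀ x y x' y' : B4, infoLe x y → infoLe x' y' →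
    infoLe (bjoin x x') (bjoin y y') := by decide

lemma bneg_infoLe_bneg : ∀ x y : B4, infoLe x y → infoLe (bneg x) (bneg y) := by decide

lemma desB_of_infoLe : ∀ x y : B4, infoLe x y → desB x → desB y := by decide

lemma desB_iff_t_infoLe : ∀ x : B4, desB x ↔ infoLe B4.t x := by decide

lemma desB_bmeet_iff : ∀ x y : B4, desB (bmeet x y) ↔ desB x ∧ desB y := by decide

lemma desB_bjoin_iff : ∀ x y : B4, desB (bjoin x y) ↔ desB x ∨ desB y := by decide

def conf : B4 → B4
  | .f => .f
  | .t => .t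
  | .n => .b
  | .b => .n

lemma conf_bmeet : ∀ x y : B4, conf (bmeet x y) = bmeet (conf x) (conf y) := by decide

lemma conf_bjoin : ∀ x y : B4, conf (bjoin x y) = bjoin (conf x) (conf y) := by decide

lemma conf_bneg : ∀ x : B4, conf (bneg x) = bneg (conf x) := by decide

lemma eq_t_iff_desB_and_desB_conf : ∀ x : B4, x = B4.t ↔ desB x ∧ desB (conf x) := by decide

lemma infoLe_conf_of_ne_b : ∀ x : B4, x ≠ B4.b → infoLe x (conf x) := by decide

end B4

open B4

section Evaluation

lemma evalv_infoLe_evalv (φ : Fm) {v w : ℕ → B4} (h : ∀ i, occurs i φ → infoLe (v i) (w i)) :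
    infoLe (evalv v φ) (evalv w φ) := by
  induction φ with
  | atom j => exact h j rfl
  | conj a b iha ihb =>
      exact bmeet_infoLe_bmeet _ _ _ _ (iha fun i hi => h i (Or.inl hi))
        (ihb fun i hi => h i (Or.inr hi))
  | disj a b iha ihb =>
      exact bjoin_infoLe_bjoin _ _ _ _ (iha fun i hi => h i (Or.inl hi))
        (ihb fun i hi => h i (Or.inr hi))
  | neg a iha => exact bneg_infoLe_bneg _ _ (iha h)
  | top | bot => exact infoLe_refl _

lemma evalv_congr (φ : Fm) {v w : ℕ → B4} (h : ∀ i, occurs i φ → v i = w i) :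
    evalv v φ = evalv w φ := by
  induction φ with
  | atom j => exact h j rfl
  | conj a b iha ihb | disj a b iha ihb =>
      simp only [evalv, iha fun i hi => h i (Or.inl hi), ihb fun i hi => h i (Or.inr hi)]
  | neg a iha => simp only [evalv, iha h]
  | top | bot => rfl

lemma evalv_conf (φ : Fm) (v : ℕ → B4) : evalv (conf ∘ v) φ = conf (evalv v φ) := by
  induction φ with
  | atom j => rfl
  | conj a b iha ihb => simp only [evalv, iha, ihb, conf_bmeet]
  | disj a b iha ihb => simp only [evalv, iha, ihb, conf_bjoin]
  | neg a iha => simp only [evalv, iha, conf_bneg]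
  | top | bot => rfl

lemma evalv_eq_t_iff (φ : Fm) (v : ℕ → B4) :
    evalv v φ = B4.t ↔ desB (evalv v φ) ∧ desB (evalv (conf ∘ v) φ) := by
  rw [evalv_conf]
  exact eq_t_iff_desB_and_desB_conf _

lemma evalv_eq_t_of_desB_of_ne_b (φ : Fm) {v : ℕ → B4} (hv : ∀ j, v j ≠ B4.b)
    (h : desB (evalv v φ)) : evalv v φ = B4.t :=
  (evalv_eq_t_iff φ v).mpr ⟨h, desB_of_infoLe _ _
    (evalv_infoLe_evalv φ fun i _ => infoLe_conf_of_ne_b _ (hv i)) h⟩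

end Evaluation

section Atoms

def atoms : Fm → Finset ℕ
  | .atom j => {j}
  | .conj φ ψ | .disj φ ψ => atoms φ ∪ atoms ψ
  | .neg φ => atoms φ
  | .top | .bot => ∅

@[simp]
lemma mem_atoms {i : ℕ} {φ : Fm} : i ∈ atoms φ ↔ occurs i φ := by
  induction φ with
  | atom j => simp [atoms, occurs]
  | conj a b iha ihb | disj a b iha ihb => simp [atoms, occurs, iha, ihb]
  | neg a iha => simpa [atoms, occurs] using iha
  | top | bot => simp [atoms, occurs]

def restrictAtoms (φ : Fm) (w : ℕ → B4) (i : ℕ) : B4 :=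
  if i ∈ atoms φ then w i else B4.n

lemma evalv_restrictAtoms (φ : Fm) (w : ℕ → B4) : evalv (restrictAtoms φ w) φ = evalv w φ :=
  evalv_congr φ fun _ hi => if_pos (mem_atoms.mpr hi)

lemma restrictAtoms_ne_b {φ : Fm} {w : ℕ → B4} (hw : ∀ j, w j ≠ B4.b) (j : ℕ) :
    restrictAtoms φ w j ≠ B4.b := by
  unfold restrictAtoms
  split
  · exact hw j
  · decide

end Atoms

section BigConnectives

def bigConj : List Fm → Fm := List.foldr Fm.conj Fm.top

def bigDisj : List Fm → Fm := List.foldr Fm.disj Fm.bot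

lemma desB_evalv_bigConj (v : ℕ → B4) (L : List Fm) :
    desB (evalv v (bigConj L)) ↔ ∀ x ∈ L, desB (evalv v x) := by
  induction L with
  | nil => simp [bigConj, evalv, desB]
  | cons x L ih => simp [bigConj, evalv, desB_bmeet_iff, ← ih]

lemma desB_evalv_bigDisj (v : ℕ → B4) (L : List Fm) :
    desB (evalv v (bigDisj L)) ↔ ∃ x ∈ L, desB (evalv v x) := by
  induction L with
  | nil => simp [bigDisj, evalv, desB]
  | cons x L ih => simp [bigDisj, evalv, desB_bjoin_iff, ← ih]

lemma occurs_bigConj (i : ℕ) (L : List Fm) : occurs i (bigConj L) ↔ ∃ x ∈ L, occurs i x := by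
  induction L with
  | nil => simp [bigConj, occurs]
  | cons x L ih => simp [bigConj, occurs, ← ih]

lemma occurs_bigDisj (i : ℕ) (L : List Fm) : occurs i (bigDisj L) ↔ ∃ x ∈ L, occurs i x := by
  induction L with
  | nil => simp [bigDisj, occurs]
  | cons x L ih => simp [bigDisj, occurs, ← ih]

end BigConnectives

section Diagram

def charFm : B4 → ℕ → Fm
  | .n, _ => .top
  | .t, p => .atom p
  | .f, p => .neg (.atom p)
  | .b, p => .conj (.atom p) (.neg (.atom p))

lemma desB_evalv_charFm (a : B4) (p : ℕ) (w : ℕ → B4) :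
    desB (evalv w (charFm a p)) ↔ infoLe a (w p) := by
  cases a <;> simp only [charFm, evalv] <;> generalize w p = x <;> revert x <;> decide

lemma eq_of_occurs_charFm {a : B4} {p i : ℕ} (h : occurs i (charFm a p)) : i = p := by
  cases a <;> simp_all [charFm, occurs]

noncomputable def diagram (S : Finset ℕ) (u : S → B4) : Fm :=
  bigConj (S.attach.toList.map fun p => charFm (u p) p)

lemma desB_evalv_diagram (S : Finset ℕ) (u : S → B4) (w : ℕ → B4) :
    desB (evalv w (diagram S u)) ↔ ∀ p : S, infoLe (u p) (w p) := by
  simp only [diagram, desB_evalv_bigConj, List.forall_mem_map, Finset.mem_toList,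
    Finset.mem_attach, forall_const, desB_evalv_charFm]

lemma mem_of_occurs_diagram {S : Finset ℕ} {u : S → B4} {i : ℕ} (h : occurs i (diagram S u)) :
    i ∈ S := by
  obtain ⟨x, hx, hi⟩ := (occurs_bigConj i _).mp h
  obtain ⟨p, -, rfl⟩ := List.mem_map.mp hx
  exact eq_of_occurs_charFm hi ▸ p.2

end Diagram

section Interpolant

variable (P : (ℕ → B4) → Prop) (φ ψ : Fm)

def sharedAtoms : Finset ℕ := atoms φ ∩ atoms ψ

lemma mem_sharedAtoms {p : ℕ} : p ∈ sharedAtoms φ ψ ↔ occurs p φ ∧ occurs p ψ := by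
  simp [sharedAtoms]

open Classical in
noncomputable def interpolant : Fm :=
  bigDisj (((Finset.univ : Finset (sharedAtoms φ ψ → B4)).filter
    fun u => ∃ w, P w ∧ ∀ p : sharedAtoms φ ψ, w p = u p).toList.map (diagram _))

lemma occurs_interpolant {i : ℕ} (h : occurs i (interpolant P φ ψ)) :
    occurs i φ ∧ occurs i ψ := by
  obtain ⟨x, hx, hi⟩ := (occurs_bigDisj i _).mp h
  obtain ⟨u, -, rfl⟩ := List.mem_map.mp hx
  exact (mem_sharedAtoms φ ψ).mp (mem_of_occurs_diagram hi)

lemma desB_evalv_interpolant_iff (w : ℕ → B4) :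
    desB (evalv w (interpolant P φ ψ)) ↔
      ∃ w', P w' ∧ ∀ p, occurs p φ → occurs p ψ → infoLe (w' p) (w p) := by
  simp only [interpolant, desB_evalv_bigDisj, List.mem_map, Finset.mem_toList,
    Finset.mem_filter, Finset.mem_univ, true_and]
  constructor
  · rintro ⟨_, ⟨u, ⟨w', hw', hu⟩, rfl⟩, hdes⟩
    refine ⟨w', hw', fun p hpφ hpψ => ?_⟩
    have hp := (mem_sharedAtoms φ ψ).mpr ⟨hpφ, hpψ⟩
    simpa only [← hu ⟨p, hp⟩] using (desB_evalv_diagram _ u w).mp hdes ⟨p, hp⟩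
  · rintro ⟨w', hw', hle⟩
    refine ⟨_, ⟨fun p => w' p, ⟨w', hw', fun _ => rfl⟩, rfl⟩, ?_⟩
    refine (desB_evalv_diagram _ _ w).mpr fun ⟨p, hp⟩ => ?_
    exact hle p ((mem_sharedAtoms φ ψ).mp hp).1 ((mem_sharedAtoms φ ψ).mp hp).2

lemma desB_evalv_interpolant {w : ℕ → B4} (hw : P w) : desB (evalv w (interpolant P φ ψ)) :=
  (desB_evalv_interpolant_iff P φ ψ w).mpr ⟨w, hw, fun _ _ _ => infoLe_refl _⟩

lemma exists_restrictAtoms_infoLe_of_desB_evalv_interpolant {w : ℕ → B4}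
    (hw : desB (evalv w (interpolant P φ ψ))) :
    ∃ w', P w' ∧ ∀ i, occurs i ψ → infoLe (restrictAtoms φ w' i) (w i) := by
  obtain ⟨w', hw', hle⟩ := (desB_evalv_interpolant_iff P φ ψ w).mp hw
  refine ⟨w', hw', fun i hiψ => ?_⟩
  unfold restrictAtoms
  split
  · next hiφ => exact hle i (mem_atoms.mp hiφ) hiψ
  · exact infoLe_n _

end Interpolant

section Interpolation

lemma Bcon_singleton {φ ψ : Fm} : Bcon {φ} ψ ↔ ∀ v, desB (evalv v φ) → desB (evalv v ψ) := by
  simp [Bcon]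

lemma Kcon_singleton {φ ψ : Fm} :
    Kcon {φ} ψ ↔ ∀ v, (∀ j, v j ≠ B4.b) → evalv v φ = B4.t → evalv v ψ = B4.t := by
  simp [Kcon]

lemma ETLcon_singleton {φ ψ : Fm} :
    ETLcon {φ} ψ ↔ ∀ v, evalv v φ = B4.t → evalv v ψ = B4.t := by
  simp [ETLcon]

theorem Bcon_interpolation {φ ψ : Fm} (h : Bcon {φ} ψ) :
    ∃ χ : Fm, (∀ i, occurs i χ → occurs i φ ∧ occurs i ψ) ∧ Bcon {φ} χ ∧ Bcon {χ} ψ := by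
  let P := fun w => desB (evalv w φ)
  refine ⟨interpolant P φ ψ, fun i => occurs_interpolant P φ ψ,
    Bcon_singleton.mpr fun w => desB_evalv_interpolant P φ ψ,
    Bcon_singleton.mpr fun w hw => ?_⟩
  obtain ⟨w', hw', hle⟩ := exists_restrictAtoms_infoLe_of_desB_evalv_interpolant P φ ψ hw
  have hψ := Bcon_singleton.mp h _ (by rw [evalv_restrictAtoms]; exact hw')
  exact desB_of_infoLe _ _ (evalv_infoLe_evalv ψ hle) hψ

theorem Kcon_interpolation_Bcon {φ ψ : Fm} (h : Kcon {φ} ψ) :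
    ∃ χ : Fm, (∀ i, occurs i χ → occurs i φ ∧ occurs i ψ) ∧ Kcon {φ} χ ∧ Bcon {χ} ψ := by
  let P := fun w => (∀ j, w j ≠ B4.b) ∧ evalv w φ = B4.t
  refine ⟨interpolant P φ ψ, fun i => occurs_interpolant P φ ψ,
    Kcon_singleton.mpr fun w hwb hw => ?_, Bcon_singleton.mpr fun w hw => ?_⟩
  · exact evalv_eq_t_of_desB_of_ne_b _ hwb (desB_evalv_interpolant P φ ψ ⟨hwb, hw⟩)
  · obtain ⟨w', ⟨hw'b, hw'⟩, hle⟩ :=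
      exists_restrictAtoms_infoLe_of_desB_evalv_interpolant P φ ψ hw
    have hψ := Kcon_singleton.mp h _ (restrictAtoms_ne_b hw'b)
      ((evalv_restrictAtoms φ w').trans hw')
    exact (desB_iff_t_infoLe _).mpr (hψ ▸ evalv_infoLe_evalv ψ hle)

theorem ETLcon_interpolation_Bcon {φ ψ : Fm} (h : ETLcon {φ} ψ) :
    ∃ χ : Fm, (∀ i, occurs i χ → occurs i φ ∧ occurs i ψ) ∧ ETLcon {φ} χ ∧ Bcon {χ} ψ := by
  let P := fun w => evalv w φ = B4.t
  refine ⟨interpolant P φ ψ, fun i => occurs_interpolant P φ ψ,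
    ETLcon_singleton.mpr fun w hw => ?_, Bcon_singleton.mpr fun w hw => ?_⟩
  · have hconf : P (conf ∘ w) := by simp only [P, evalv_conf, hw]; rfl
    exact (evalv_eq_t_iff _ w).mpr
      ⟨desB_evalv_interpolant P φ ψ hw, desB_evalv_interpolant P φ ψ hconf⟩
  · obtain ⟨w', hw', hle⟩ := exists_restrictAtoms_infoLe_of_desB_evalv_interpolant P φ ψ hw
    have hψ := ETLcon_singleton.mp h _ ((evalv_restrictAtoms φ w').trans hw')
    exact (desB_iff_t_infoLe _).mpr (hψ ▸ evalv_infoLe_evalv ψ hle)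

end Interpolation

/-- B enjoys interpolation, K enjoys (K, B)-interpolation, and ETL enjoys
(ETL, B)-interpolation. -/
theorem stmt16 :
    (∀ φ ψ : Fm, Bcon {φ} ψ →
      ∃ χ : Fm, (∀ i, occurs i χ → occurs i φ ∧ occurs i ψ) ∧
        Bcon {φ} χ ∧ Bcon {χ} ψ) ∧
    (∀ φ ψ : Fm, Kcon {φ} ψ →
      ∃ χ : Fm, (∀ i, occurs i χ → occurs i φ ∧ occurs i ψ) ∧
        Kcon {φ} χ ∧ Bcon {χ} ψ) ∧
    (∀ φ ψ : Fm, ETLcon {φ} ψ →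
      ∃ χ : Fm, (∀ i, occurs i χ → occurs i φ ∧ occurs i ψ) ∧
        ETLcon {φ} χ ∧ Bcon {χ} ψ) :=
  ⟨fun _ _ => Bcon_interpolation, fun _ _ => Kcon_interpolation_Bcon,
    fun _ _ => ETLcon_interpolation_Bcon⟩
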